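/- arXiv:1805.10529 — 2 statements merged into one kernel-verified Lean document; each statement's English description precedes it below -/
import Mathlib

section
/- Let A₁,...,Aₙ, B₁,...,Bₙ be positive invertible operators and 0 < t ≤ 1/2. Then (ΣAᵢ)♯_t(ΣBᵢ) - Σ(Aᵢ♯_t Bᵢ) ≤ R(ΣAᵢ + ΣBᵢ - 2Σ(Aᵢ♯Bᵢ)) - r₀(Σ(Aᵢ♯Bᵢ) + ΣBᵢ - 2Σ(Aᵢ♯_{3/4}Bᵢ)) - r₀((ΣAᵢ)♯(ΣBᵢ) + ΣAᵢ - 2(ΣAᵢ)♯_{1/4}(ΣBᵢ)), where r = min{t,1-t}, R = max{t,1-t}, r₀ = min{2r,1-2r}. -/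
open scoped NNReal
open Finset

variable {A : Type*} [CStarAlgebra A] [PartialOrder A] [StarOrderedRing A]

private lemma rpow_comb {x : ℝ} (hx : 0 ≤ x) {a b c : ℝ} (h : a + b = c) (hc : c ≠ 0) :
    x ^ a * x ^ b = x ^ c := by
  rw [← h] at hc ⊢
  exact (Real.rpow_add' hx hc).symm

/-- Kittaneh–Manasrah refinement of Young's inequality. -/
private lemma km {s y : ℝ} (hs0 : 0 ≤ s) (hs1 : s ≤ 1) (hy : 0 ≤ y) :
    min s (1 - s) * (1 - y ^ ((1:ℝ)/2)) ^ 2 ≤ (1 - s) + s * y - y ^ s := by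
  set u := y ^ ((1:ℝ)/2) with hu_def
  have hu : 0 ≤ u := Real.rpow_nonneg hy _
  have huu : u * u = y := by
    rw [hu_def, rpow_comb hy (by norm_num : (1:ℝ)/2 + 1/2 = 1) one_ne_zero, Real.rpow_one]
  rcases le_total s (1/2) with hs | hs
  · have hmin : min s (1 - s) = s := min_eq_left (by linarith)
    have amgm := Real.geom_mean_le_arith_mean2_weighted (by linarith : (0:ℝ) ≤ 1 - 2*s)
      (by linarith : (0:ℝ) ≤ 2*s) (zero_le_one) hu (by ring)
    have h1 : (1:ℝ) ^ (1 - 2*s) = 1 := Real.one_rpow _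
    have h2 : u ^ (2*s) = y ^ s := by
      rw [hu_def, ← Real.rpow_mul hy]; congr 1; ring
    rw [h1, h2, one_mul] at amgm
    rw [hmin]
    nlinarith [amgm, huu]
  · have hmin : min s (1 - s) = 1 - s := min_eq_right (by linarith)
    have amgm := Real.geom_mean_le_arith_mean2_weighted (by linarith : (0:ℝ) ≤ 2*s - 1)
      (by linarith : (0:ℝ) ≤ 2 - 2*s) hy hu (by ring)
    have h2 : u ^ (2 - 2*s) = y ^ (1 - s) := by
      rw [hu_def, ← Real.rpow_mul hy]; congr 1; ring
    have h3 : y ^ (2*s - 1) * y ^ (1 - s) = y ^ s := rpow_comb hy (by ring) (by linarith)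
    rw [h2] at amgm
    rw [hmin]
    nlinarith [amgm, huu, h3]

/-- Scalar lower bound: refined Young. -/
private lemma scalar_lower {t x : ℝ} (ht0 : 0 < t) (ht : t ≤ 1/2) (hx : 0 ≤ x) :
    min (2*t) (1 - 2*t) * (x ^ ((1:ℝ)/2) + 1 - 2 * x ^ ((1:ℝ)/4)) ≤ (1 - t) + t * x - x ^ t := by
  have hp : 0 ≤ x ^ ((1:ℝ)/2) := Real.rpow_nonneg hx _
  have hKM := km (s := 2*t) (y := x ^ ((1:ℝ)/2)) (by linarith) (by linarith) hp
  have e1 : (x ^ ((1:ℝ)/2)) ^ ((1:ℝ)/2) = x ^ ((1:ℝ)/4) := by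
    rw [← Real.rpow_mul hx]; norm_num
  have e2 : (x ^ ((1:ℝ)/2)) ^ (2*t) = x ^ t := by
    rw [← Real.rpow_mul hx]; congr 1; ring
  rw [e1, e2] at hKM
  have hpp : x ^ ((1:ℝ)/2) * x ^ ((1:ℝ)/2) = x := by
    rw [rpow_comb hx (by norm_num : (1:ℝ)/2 + 1/2 = 1) one_ne_zero, Real.rpow_one]
  have hqq : x ^ ((1:ℝ)/4) * x ^ ((1:ℝ)/4) = x ^ ((1:ℝ)/2) :=
    rpow_comb hx (by norm_num) (by norm_num)
  have key1 : (1 - x ^ ((1:ℝ)/4)) ^ 2 = x ^ ((1:ℝ)/2) + 1 - 2 * x ^ ((1:ℝ)/4) := by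
    rw [sub_sq, one_pow, sq, hqq]; ring
  have key2 : (1 - x ^ ((1:ℝ)/2)) ^ 2 = 1 + x - 2 * x ^ ((1:ℝ)/2) := by
    rw [sub_sq, one_pow, sq, hpp]; ring
  have hsq := mul_nonneg ht0.le (sq_nonneg (1 - x ^ ((1:ℝ)/2)))
  rw [key2] at hsq
  rw [← key1] at *
  nlinarith [hKM, hsq]

/-- Scalar upper bound: refined reverse Young. -/
private lemma scalar_upper {t x : ℝ} (ht0 : 0 < t) (ht : t ≤ 1/2) (hx : 0 ≤ x) :
    (1 - t) + t * x - x ^ t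
      ≤ (1 - t) * (1 + x - 2 * x ^ ((1:ℝ)/2))
        - min (2*t) (1 - 2*t) * (x ^ ((1:ℝ)/2) + x - 2 * x ^ ((3:ℝ)/4)) := by
  rcases le_total t (1/4) with h4 | h4
  · have hmin : min (2*t) (1 - 2*t) = 2*t := min_eq_left (by linarith)
    have amgm := Real.geom_mean_le_arith_mean3_weighted
      (by norm_num : (0:ℝ) ≤ 1/2) (by linarith : (0:ℝ) ≤ (1 - 4*t)/2) (by linarith : (0:ℝ) ≤ 2*t)
      (Real.rpow_nonneg hx t) hx (Real.rpow_nonneg hx ((3:ℝ)/4)) (by ring)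
    have e1 : (x ^ t) ^ ((1:ℝ)/2) = x ^ (t/2) := by
      rw [← Real.rpow_mul hx]; congr 1; ring
    have e2 : (x ^ ((3:ℝ)/4)) ^ (2*t) = x ^ (3*t/2) := by
      rw [← Real.rpow_mul hx]; congr 1; ring
    have e3 : x ^ (t/2) * x ^ ((1 - 4*t)/2) * x ^ (3*t/2) = x ^ ((1:ℝ)/2) := by
      rw [rpow_comb hx (by ring : t/2 + (1 - 4*t)/2 = (1 - 3*t)/2) (by intro h; nlinarith)]
      exact rpow_comb hx (by ring) (by norm_num)
    rw [e1, e2, e3] at amgm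
    rw [hmin]
    linarith [amgm]
  · have hmin : min (2*t) (1 - 2*t) = 1 - 2*t := min_eq_right (by linarith)
    have h34 : (0:ℝ) < 3 - 4*t := by linarith
    have amgm := Real.geom_mean_le_arith_mean2_weighted
      (by positivity : (0:ℝ) ≤ 1/(3 - 4*t))
      (div_nonneg (by linarith) (by linarith) : (0:ℝ) ≤ (2 - 4*t)/(3 - 4*t))
      (Real.rpow_nonneg hx t) (Real.rpow_nonneg hx ((3:ℝ)/4))
      (by field_simp; ring)
    have e1 : (x ^ t) ^ ((1:ℝ)/(3 - 4*t)) = x ^ (t/(3 - 4*t)) := by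
      rw [← Real.rpow_mul hx]; congr 1; ring
    have e2 : (x ^ ((3:ℝ)/4)) ^ ((2 - 4*t)/(3 - 4*t)) = x ^ ((3/4) * ((2 - 4*t)/(3 - 4*t))) := by
      rw [← Real.rpow_mul hx]
    have e3 : x ^ (t/(3 - 4*t)) * x ^ ((3/4) * ((2 - 4*t)/(3 - 4*t))) = x ^ ((1:ℝ)/2) := by
      refine rpow_comb hx ?_ (by norm_num)
      rw [mul_div_assoc', ← add_div, div_eq_iff h34.ne']
      ring
    rw [e1, e2, e3] at amgm
    rw [hmin]
    have amgm' : (3 - 4*t) * x ^ ((1:ℝ)/2) ≤ x ^ t + (2 - 4*t) * x ^ ((3:ℝ)/4) := by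
      have h := mul_le_mul_of_nonneg_left amgm h34.le
      calc (3 - 4*t) * x ^ ((1:ℝ)/2)
          ≤ (3 - 4*t) * (1/(3 - 4*t) * x ^ t + (2 - 4*t)/(3 - 4*t) * x ^ ((3:ℝ)/4)) := h
        _ = x ^ t + (2 - 4*t) * x ^ ((3:ℝ)/4) := by field_simp
    linarith [amgm']

/-- The `s`-weighted geometric mean `a ♯ₛ b = a^{1/2} (a^{-1/2} b a^{-1/2})^s a^{1/2}`,
with real powers given by the continuous functional calculus. -/
noncomputable def geomMean (a b : A) (s : ℝ) : A :=
  a ^ ((1 : ℝ) / 2) * (a ^ (-(1 : ℝ) / 2) * b * a ^ (-(1 : ℝ) / 2)) ^ s * a ^ ((1 : ℝ) / 2)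


private lemma contOn_rpow (s : ℝ) (hs : 0 ≤ s) (S : Set ℝ) :
    ContinuousOn (fun y : ℝ => y ^ s) S := fun y _ =>
  (Real.continuousAt_rpow_const y s (Or.inr hs)).continuousWithinAt

private lemma rpow_eq_cfcReal (c : A) (hc : 0 ≤ c) (s : ℝ) :
    c ^ s = cfc (fun y : ℝ => y ^ s) c := by
  rw [CFC.rpow_def, cfc_nnreal_eq_real _ c hc]
  exact cfc_congr fun y hy => by
    have hy0 : 0 ≤ y := spectrum_nonneg_of_nonneg hc hy
    simp [NNReal.coe_rpow, Real.coe_toNNReal y hy0]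

private lemma cfc_comb (c : A) (hc : 0 ≤ c) (α β γ δ p q : ℝ) (hp : 0 ≤ p) (hq : 0 ≤ q) :
    cfc (fun y : ℝ => α + β * y + γ * y ^ p + δ * y ^ q) c
      = α • (1 : A) + β • c + γ • c ^ p + δ • c ^ q := by
  have h0 : ContinuousOn (fun y : ℝ => α + β * y) (spectrum ℝ c) := by fun_prop
  have h1 : ContinuousOn (fun y : ℝ => γ * y ^ p) (spectrum ℝ c) :=
    (contOn_rpow p hp _).const_smul γ
  have h2 : ContinuousOn (fun y : ℝ => δ * y ^ q) (spectrum ℝ c) :=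
    (contOn_rpow q hq _).const_smul δ
  have hsa : IsSelfAdjoint c := .of_nonneg hc
  rw [cfc_add (a := c) (fun y : ℝ => α + β * y + γ * y ^ p) (fun y => δ * y ^ q) (h0.add h1) h2,
    cfc_add (a := c) (fun y : ℝ => α + β * y) (fun y => γ * y ^ p) h0 h1,
    cfc_add (a := c) (fun _ : ℝ => α) (fun y => β * y) (by fun_prop) (by fun_prop),
    cfc_const α c, cfc_const_mul β (fun y : ℝ => y) c (by fun_prop),
    cfc_const_mul γ (fun y : ℝ => y ^ p) c (contOn_rpow p hp _),
    cfc_const_mul δ (fun y : ℝ => y ^ q) c (contOn_rpow q hq _),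
    cfc_id' ℝ c, ← rpow_eq_cfcReal c hc p, ← rpow_eq_cfcReal c hc q,
    Algebra.algebraMap_eq_smul_one]

/-- Master lemma: scalar inequalities between 4-term power combinations transfer to
operator inequalities between combinations of weighted geometric means. -/
private lemma pair_main {a b : A} (ha : 0 ≤ a) (ha' : IsUnit a) (hb : 0 ≤ b)
    {α β γ δ α' β' γ' δ' p q p' q' : ℝ}
    (hp : 0 ≤ p) (hq : 0 ≤ q) (hp' : 0 ≤ p') (hq' : 0 ≤ q')
    (hineq : ∀ y : ℝ, 0 ≤ y →
      α + β * y + γ * y ^ p + δ * y ^ q ≤ α' + β' * y + γ' * y ^ p' + δ' * y ^ q') :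
    α • a + β • b + γ • geomMean a b p + δ • geomMean a b q
      ≤ α' • a + β' • b + γ' • geomMean a b p' + δ' • geomMean a b q' := by
  set x := a ^ ((1:ℝ)/2) with hx_def
  set c := a ^ (-(1:ℝ)/2) * b * a ^ (-(1:ℝ)/2) with hc_def
  have ha0 : (0 : ℝ≥0) ∉ spectrum ℝ≥0 a := spectrum.zero_notMem ℝ≥0 ha'
  have hxneg : a ^ (-(1:ℝ)/2) = a ^ (-((1:ℝ)/2)) := by norm_num
  have hxsa : IsSelfAdjoint x := .of_nonneg CFC.rpow_nonneg
  have hnegsa : IsSelfAdjoint (a ^ (-(1:ℝ)/2)) := .of_nonneg CFC.rpow_nonneg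
  have hxx : x * x = a := by
    rw [hx_def, ← CFC.rpow_add ha']
    norm_num
    exact CFC.rpow_one a ha
  have hxinv : x * a ^ (-(1:ℝ)/2) = 1 := by
    rw [hx_def, hxneg, CFC.rpow_mul_rpow_neg _ (ha'.isStrictlyPositive ha)]
  have hinvx : a ^ (-(1:ℝ)/2) * x = 1 := by
    rw [hx_def, hxneg, CFC.rpow_neg_mul_rpow _ (ha'.isStrictlyPositive ha)]
  have hc0 : 0 ≤ c := by
    have h := star_left_conjugate_nonneg hb (a ^ (-(1:ℝ)/2))
    rw [hnegsa.star_eq] at h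
    exact h
  have hxcx : x * c * x = b := by
    rw [hc_def]
    calc x * (a ^ (-(1:ℝ)/2) * b * a ^ (-(1:ℝ)/2)) * x
        = (x * a ^ (-(1:ℝ)/2)) * b * (a ^ (-(1:ℝ)/2) * x) := by noncomm_ring
      _ = b := by rw [hxinv, hinvx, one_mul, mul_one]
  have hmono : cfc (fun y : ℝ => α + β * y + γ * y ^ p + δ * y ^ q) c
      ≤ cfc (fun y : ℝ => α' + β' * y + γ' * y ^ p' + δ' * y ^ q') c := by
    refine cfc_mono (fun y hy => hineq y (spectrum_nonneg_of_nonneg hc0 hy)) ?_ ?_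
    · exact ((continuousOn_const.add (continuousOn_const.mul continuousOn_id)).add
        ((contOn_rpow p hp _).const_smul γ)).add ((contOn_rpow q hq _).const_smul δ)
    · exact ((continuousOn_const.add (continuousOn_const.mul continuousOn_id)).add
        ((contOn_rpow p' hp' _).const_smul γ')).add ((contOn_rpow q' hq' _).const_smul δ')
  rw [cfc_comb c hc0 _ _ _ _ _ _ hp hq, cfc_comb c hc0 _ _ _ _ _ _ hp' hq'] at hmono
  have hconj := hxsa.conjugate_le_conjugate hmono
  have dist : ∀ (α β γ δ : ℝ) (u v : A),
      x * (α • (1:A) + β • c + γ • u + δ • v) * x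
        = α • a + β • b + γ • (x * u * x) + δ • (x * v * x) := by
    intro α β γ δ u v
    simp only [mul_add, add_mul, mul_smul_comm, smul_mul_assoc, mul_one, hxx, hxcx]
  rw [dist, dist] at hconj
  exact hconj

/-- Difference-type reverse of the operator Hölder inequality (Theorem 3.1(i)),
for `0 < t ≤ 1/2`. -/
theorem reverse_operator_holder (n : ℕ) (a b : Fin n → A)
    (ha : ∀ i, 0 ≤ a i) (ha' : ∀ i, IsUnit (a i))
    (hb : ∀ i, 0 ≤ b i) (hb' : ∀ i, IsUnit (b i))
    (t : ℝ) (ht0 : 0 < t) (ht : t ≤ 1 / 2) :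
    geomMean (∑ i, a i) (∑ i, b i) t - ∑ i, geomMean (a i) (b i) t
      ≤ max t (1 - t) •
          (∑ i, a i + ∑ i, b i - (2 : ℝ) • ∑ i, geomMean (a i) (b i) (1 / 2))
        - min (2 * min t (1 - t)) (1 - 2 * min t (1 - t)) •
            (∑ i, geomMean (a i) (b i) (1 / 2) + ∑ i, b i
              - (2 : ℝ) • ∑ i, geomMean (a i) (b i) (3 / 4))
        - min (2 * min t (1 - t)) (1 - 2 * min t (1 - t)) •
            (geomMean (∑ i, a i) (∑ i, b i) (1 / 2) + ∑ i, a i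
              - (2 : ℝ) • geomMean (∑ i, a i) (∑ i, b i) (1 / 4)) := by
  rw [show max t (1 - t) = 1 - t from max_eq_right (by linarith),
    show min t (1 - t) = t from min_eq_left (by linarith)]
  set m := min (2 * t) (1 - 2 * t) with hm_def
  rcases Nat.eq_zero_or_pos n with hn | hn
  · subst hn
    have h0 : (0 : A) ^ ((1:ℝ)/2) = 0 := by
      rw [← CFC.rpow_eq_pow]; exact CFC.zero_rpow (by norm_num)
    have hg : ∀ s : ℝ, geomMean (0 : A) 0 s = 0 := by
      intro s
      rw [geomMean, h0, zero_mul, zero_mul]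
    simp [hg]
  have i0 : Fin n := ⟨0, hn⟩
  have hSA : 0 ≤ ∑ i, a i := Finset.sum_nonneg fun i _ => ha i
  have hSB : 0 ≤ ∑ i, b i := Finset.sum_nonneg fun i _ => hb i
  have hSAu : IsUnit (∑ i, a i) :=
    CStarAlgebra.isUnit_of_le (a i0)
      (Finset.single_le_sum (fun i _ => ha i) (Finset.mem_univ i0)) ((ha' i0).isStrictlyPositive (ha i0))
  have up_pair : ∀ i : Fin n,
      (1 - t) • a i + t • b i + (-1 : ℝ) • geomMean (a i) (b i) t
          + (0 : ℝ) • geomMean (a i) (b i) (3/4)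
        ≤ (1 - t) • a i + (1 - t - m) • b i
          + (-(2*(1 - t)) - m) • geomMean (a i) (b i) (1/2)
          + (2*m) • geomMean (a i) (b i) (3/4) := by
    intro i
    refine pair_main (ha i) (ha' i) (hb i) ht0.le (by norm_num) (by norm_num) (by norm_num) ?_
    intro y hy
    have h := scalar_upper ht0 ht hy
    rw [← hm_def] at h
    linarith [h]
  have sum_up : (1 - t) • (∑ i, a i) + t • (∑ i, b i)
          + (-1 : ℝ) • (∑ i, geomMean (a i) (b i) t)
          + (0 : ℝ) • (∑ i, geomMean (a i) (b i) (3/4))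
        ≤ (1 - t) • (∑ i, a i) + (1 - t - m) • (∑ i, b i)
          + (-(2*(1 - t)) - m) • (∑ i, geomMean (a i) (b i) (1/2))
          + (2*m) • (∑ i, geomMean (a i) (b i) (3/4)) := by
    simpa only [Finset.smul_sum, ← Finset.sum_add_distrib] using
      Finset.sum_le_sum fun i (_ : i ∈ Finset.univ) => up_pair i
  have lo : m • (∑ i, a i) + (0 : ℝ) • (∑ i, b i)
          + m • geomMean (∑ i, a i) (∑ i, b i) (1/2)
          + (-(2*m)) • geomMean (∑ i, a i) (∑ i, b i) (1/4)
        ≤ (1 - t) • (∑ i, a i) + t • (∑ i, b i)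
          + (-1 : ℝ) • geomMean (∑ i, a i) (∑ i, b i) t
          + (0 : ℝ) • geomMean (∑ i, a i) (∑ i, b i) (1/4) := by
    refine pair_main hSA hSAu hSB (by norm_num) (by norm_num) ht0.le (by norm_num) ?_
    intro y hy
    have h := scalar_lower ht0 ht hy
    rw [← hm_def] at h
    linarith [h]
  calc geomMean (∑ i, a i) (∑ i, b i) t - ∑ i, geomMean (a i) (b i) t
      = ((1 - t) • (∑ i, a i) + t • (∑ i, b i)
          + (-1 : ℝ) • (∑ i, geomMean (a i) (b i) t)
          + (0 : ℝ) • (∑ i, geomMean (a i) (b i) (3/4)))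
        - ((1 - t) • (∑ i, a i) + t • (∑ i, b i)
          + (-1 : ℝ) • geomMean (∑ i, a i) (∑ i, b i) t
          + (0 : ℝ) • geomMean (∑ i, a i) (∑ i, b i) (1/4)) := by module
    _ ≤ ((1 - t) • (∑ i, a i) + (1 - t - m) • (∑ i, b i)
          + (-(2*(1 - t)) - m) • (∑ i, geomMean (a i) (b i) (1/2))
          + (2*m) • (∑ i, geomMean (a i) (b i) (3/4)))
        - (m • (∑ i, a i) + (0 : ℝ) • (∑ i, b i)
          + m • geomMean (∑ i, a i) (∑ i, b i) (1/2)
          + (-(2*m)) • geomMean (∑ i, a i) (∑ i, b i) (1/4)) := sub_le_sub sum_up lo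
    _ = (1 - t) • (∑ i, a i + ∑ i, b i - (2 : ℝ) • ∑ i, geomMean (a i) (b i) (1 / 2))
        - m • (∑ i, geomMean (a i) (b i) (1 / 2) + ∑ i, b i
              - (2 : ℝ) • ∑ i, geomMean (a i) (b i) (3 / 4))
        - m • (geomMean (∑ i, a i) (∑ i, b i) (1 / 2) + ∑ i, a i
              - (2 : ℝ) • geomMean (∑ i, a i) (∑ i, b i) (1 / 4)) := by module
end

section
/- Let A, B be positive invertible operators on a Hilbert space, Φ, Ψ unital positive linear maps, x a unit vector, and 0 < t ≤ 1/2. Then 2r(½(⟨Φ(A)x,x⟩ + ⟨Ψ(B)x,x⟩) - ⟨Φ(A^{1/2})x,x⟩⟨Ψ(B^{1/2})x,x⟩) + r₀(⟨Φ(A^{1/2})x,x⟩⟨Ψ(B^{1/2})x,x⟩ + ⟨Φ(A)x,x⟩ - 2⟨Φ(A^{3/4})x,x⟩⟨Ψ(B^{1/4})x,x⟩) ≤ (1-t)⟨Φ(A)x,x⟩ + t⟨Ψ(B)x,x⟩ - ⟨Ψ(B^t)x,x⟩⟨Φ(A^{1-t})x,x⟩, where r = min{t,1-t}, r₀ = min{2r,1-2r}.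 -/
open scoped NNReal InnerProductSpace

variable {H : Type*} [NormedAddCommGroup H] [InnerProductSpace ℂ H] [CompleteSpace H]

/-- The real number `⟨T x, x⟩` for a (positive) operator `T` and vector `x`. -/
noncomputable def ip (T : H →L[ℂ] H) (x : H) : ℝ := (⟪T x, x⟫_ℂ).re

section Scalar

/-- two-term weighted AM-GM for reals -/
lemma amgm2' (w₁ w₂ p₁ p₂ : ℝ) (h₁ : 0 ≤ w₁) (h₂ : 0 ≤ w₂) (hp₁ : 0 ≤ p₁) (hp₂ : 0 ≤ p₂)
    (hw : w₁ + w₂ = 1) : p₁ ^ w₁ * p₂ ^ w₂ ≤ w₁ * p₁ + w₂ * p₂ := by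
  simpa only [Fin.prod_univ_succ, Fin.sum_univ_succ, Finset.prod_empty, Finset.sum_empty,
    Finset.univ_eq_empty, Fin.cons_succ, Fin.cons_zero, add_zero, mul_one,
    Matrix.cons_val_zero, Matrix.cons_val_one, Matrix.head_cons, Matrix.cons_val_succ] using
    Real.geom_mean_le_arith_mean_weighted Finset.univ ![w₁, w₂] ![p₁, p₂]
      (by intro i _; fin_cases i <;> simpa)
      (by simp [Fin.sum_univ_succ, hw])
      (by intro i _; fin_cases i <;> simpa)

lemma KMhalf (a b ν : ℝ) (ha : 0 < a) (hb : 0 < b) (h0 : 0 ≤ ν) (hν : ν ≤ 1/2) :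
    a ^ ν * b ^ (1 - ν) + ν * (Real.sqrt a - Real.sqrt b) ^ 2 ≤ ν * a + (1 - ν) * b := by
  have key : a ^ ν * b ^ (1 - ν) ≤ (2*ν) * (Real.sqrt a * Real.sqrt b) + (1 - 2*ν) * b := by
    have h := amgm2' (2*ν) (1-2*ν) (Real.sqrt a * Real.sqrt b) b (by linarith) (by linarith)
      (by positivity) hb.le (by ring)
    have e1 : (Real.sqrt a * Real.sqrt b) ^ (2*ν) = a ^ ν * b ^ ν := by
      rw [Real.mul_rpow (Real.sqrt_nonneg a) (Real.sqrt_nonneg b), Real.sqrt_eq_rpow,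
        Real.sqrt_eq_rpow, ← Real.rpow_mul ha.le, ← Real.rpow_mul hb.le,
        show (1:ℝ)/2*(2*ν) = ν by ring]
    have e2 : a ^ ν * b ^ ν * b ^ (1-2*ν) = a ^ ν * b ^ (1 - ν) := by
      rw [mul_assoc, ← Real.rpow_add hb]
      ring_nf
    rw [e1] at h
    calc a ^ ν * b ^ (1 - ν) = a ^ ν * b ^ ν * b ^ (1-2*ν) := e2.symm
      _ ≤ _ := h
  have hsq : (Real.sqrt a - Real.sqrt b)^2 = a + b - 2*(Real.sqrt a * Real.sqrt b) := by
    rw [sub_sq, Real.sq_sqrt ha.le, Real.sq_sqrt hb.le]; ring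
  rw [hsq]
  nlinarith [key]

lemma KM (a b ν : ℝ) (ha : 0 < a) (hb : 0 < b) (h0 : 0 ≤ ν) (h1 : ν ≤ 1) :
    a ^ ν * b ^ (1 - ν) + min ν (1-ν) * (Real.sqrt a - Real.sqrt b)^2 ≤ ν*a + (1-ν)*b := by
  rcases le_total ν (1/2) with h|h
  · rw [min_eq_left (by linarith)]
    exact KMhalf a b ν ha hb h0 h
  · rw [min_eq_right (by linarith)]
    have h2 := KMhalf b a (1-ν) hb ha (by linarith) (by linarith)
    rw [show (1 - (1-ν)) = ν by ring] at h2
    have h3 : (Real.sqrt b - Real.sqrt a)^2 = (Real.sqrt a - Real.sqrt b)^2 := by ring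
    rw [h3] at h2
    nlinarith [h2]

lemma scalar_key (a b t : ℝ) (ha : 0 < a) (hb : 0 < b) (ht0 : 0 < t) (ht : t ≤ 1/2) :
    2*t*((a+b)/2 - a^((1:ℝ)/2)*b^((1:ℝ)/2))
      + min (2*t) (1-2*t) * (a^((1:ℝ)/2)*b^((1:ℝ)/2) + a - 2*(a^((3:ℝ)/4)*b^((1:ℝ)/4)))
      ≤ (1-t)*a + t*b - b^t * a^(1-t) := by
  set v := a^((1:ℝ)/2)*b^((1:ℝ)/2) with hv
  have hv0 : 0 < v := mul_pos (Real.rpow_pos_of_pos ha _) (Real.rpow_pos_of_pos hb _)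
  have hKM := KM v a (2*t) hv0 ha (by linarith) (by linarith)
  have hpow : v ^ (2*t) * a ^ (1-2*t) = b^t * a^(1-t) := by
    rw [hv, Real.mul_rpow (Real.rpow_pos_of_pos ha _).le (Real.rpow_pos_of_pos hb _).le,
      ← Real.rpow_mul ha.le, ← Real.rpow_mul hb.le]
    rw [show (1:ℝ)/2*(2*t) = t by ring]
    rw [mul_right_comm, ← Real.rpow_add ha, show t + (1-2*t) = 1-t by ring, mul_comm]
  have hsqv : Real.sqrt v * Real.sqrt a = a^((3:ℝ)/4)*b^((1:ℝ)/4) := by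
    rw [Real.sqrt_eq_rpow, Real.sqrt_eq_rpow, hv,
      Real.mul_rpow (Real.rpow_pos_of_pos ha _).le (Real.rpow_pos_of_pos hb _).le,
      ← Real.rpow_mul ha.le, ← Real.rpow_mul hb.le]
    rw [show (1:ℝ)/2*(1/2) = 1/4 by norm_num]
    rw [mul_right_comm, ← Real.rpow_add ha]
    norm_num
  have hsq : (Real.sqrt v - Real.sqrt a)^2 = v + a - 2*(a^((3:ℝ)/4)*b^((1:ℝ)/4)) := by
    rw [sub_sq, Real.sq_sqrt hv0.le, Real.sq_sqrt ha.le, mul_assoc, hsqv]; ring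
  rw [hpow, hsq] at hKM
  linarith [hKM]

end Scalar

section Op

lemma ip_nonneg {T : H →L[ℂ] H} (hT : 0 ≤ T) (x : H) : 0 ≤ ip T x := by
  have := ((ContinuousLinearMap.nonneg_iff_isPositive T).mp hT).inner_nonneg_left x
  simpa [ip, ContinuousLinearMap.reApplyInnerSelf] using (Complex.le_def.mp this).1

lemma ip_add (T S : H →L[ℂ] H) (x : H) : ip (T + S) x = ip T x + ip S x := by
  simp [ip, inner_add_left]

lemma ip_smul (c : ℝ) (T : H →L[ℂ] H) (x : H) : ip (c • T) x = c * ip T x := by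
  simp [ip, ContinuousLinearMap.smul_apply, inner_smul_left_eq_smul, Complex.real_smul]

lemma ip_one {x : H} (hx : ‖x‖ = 1) : ip 1 x = 1 := by
  simp [ip, inner_self_eq_norm_sq_to_K, hx]

set_option maxHeartbeats 1000000 in
lemma step (Φ : (H →L[ℂ] H) →ₗ[ℂ] (H →L[ℂ] H))
    (hΦ : ∀ X : H →L[ℂ] H, 0 ≤ X → 0 ≤ Φ X) (hΦ1 : Φ 1 = 1)
    (A : H →L[ℂ] H) (hA : 0 ≤ A) (hA' : IsUnit A) (x : H) (hx : ‖x‖ = 1)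
    (c0 c1 c2 c3 c4 e1 e2 e3 e4 : ℝ)
    (h : ∀ a : ℝ, 0 < a → 0 ≤ c0 + c1 * a ^ e1 + c2 * a ^ e2 + c3 * a ^ e3 + c4 * a ^ e4) :
    0 ≤ c0 + c1 * ip (Φ (A ^ e1)) x + c2 * ip (Φ (A ^ e2)) x + c3 * ip (Φ (A ^ e3)) x
      + c4 * ip (Φ (A ^ e4)) x := by
  have hsa : IsSelfAdjoint A := .of_nonneg hA
  have hspec : ∀ a ∈ spectrum ℝ A, 0 < a := by
    intro a ha
    rcases (spectrum_nonneg_of_nonneg hA ha).lt_or_eq with h' | h'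
    · exact h'
    · rw [← h'] at ha
      exact absurd hA' ((spectrum.zero_mem_iff ℝ).mp ha)
  have hcont : ∀ e : ℝ, ContinuousOn (fun a : ℝ => a ^ e) (spectrum ℝ A) := fun e a ha =>
    (Real.continuousAt_rpow_const a e (Or.inl (hspec a ha).ne')).continuousWithinAt
  have hcont' : ∀ c e : ℝ, ContinuousOn (fun a : ℝ => c * a ^ e) (spectrum ℝ A) := fun c e =>
    (hcont e).const_smul c
  have hrpow : ∀ e : ℝ, A ^ e = cfc (fun a : ℝ => a ^ e) A := by
    intro e
    rw [CFC.rpow_def, cfc_nnreal_eq_real _ A hA]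
    apply cfc_congr
    intro a ha
    simp only [NNReal.coe_rpow, Real.coe_toNNReal a (hspec a ha).le]
  have key : (0 : H →L[ℂ] H) ≤ c0 • 1 + c1 • A ^ e1 + c2 • A ^ e2 + c3 • A ^ e3 + c4 • A ^ e4 := by
    have h0 : (0 : H →L[ℂ] H) ≤ cfc
        (fun a : ℝ => c0 + c1 * a ^ e1 + c2 * a ^ e2 + c3 * a ^ e3 + c4 * a ^ e4) A :=
      cfc_nonneg fun a ha => h a (hspec a ha)
    have E : cfc (fun a : ℝ => c0 + c1 * a ^ e1 + c2 * a ^ e2 + c3 * a ^ e3 + c4 * a ^ e4) A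
        = c0 • 1 + c1 • A ^ e1 + c2 • A ^ e2 + c3 • A ^ e3 + c4 • A ^ e4 := by
      rw [cfc_add A (fun a : ℝ => c0 + c1 * a ^ e1 + c2 * a ^ e2 + c3 * a ^ e3)
          (fun a : ℝ => c4 * a ^ e4)
          (((continuousOn_const.add (hcont' c1 e1)).add (hcont' c2 e2)).add (hcont' c3 e3))
          (hcont' c4 e4),
        cfc_add A (fun a : ℝ => c0 + c1 * a ^ e1 + c2 * a ^ e2) (fun a : ℝ => c3 * a ^ e3)
          ((continuousOn_const.add (hcont' c1 e1)).add (hcont' c2 e2)) (hcont' c3 e3),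
        cfc_add A (fun a : ℝ => c0 + c1 * a ^ e1) (fun a : ℝ => c2 * a ^ e2)
          (continuousOn_const.add (hcont' c1 e1)) (hcont' c2 e2),
        cfc_add A (fun _ : ℝ => c0) (fun a : ℝ => c1 * a ^ e1)
          continuousOn_const (hcont' c1 e1),
        cfc_const c0 A, cfc_const_mul c1 (fun a : ℝ => a ^ e1) A (hcont e1),
        cfc_const_mul c2 (fun a : ℝ => a ^ e2) A (hcont e2),
        cfc_const_mul c3 (fun a : ℝ => a ^ e3) A (hcont e3),
        cfc_const_mul c4 (fun a : ℝ => a ^ e4) A (hcont e4),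
        ← hrpow e1, ← hrpow e2, ← hrpow e3, ← hrpow e4,
        Algebra.algebraMap_eq_smul_one]
    rw [← E]
    exact h0
  have h1 : 0 ≤ ip (Φ (c0 • 1 + c1 • A ^ e1 + c2 • A ^ e2 + c3 • A ^ e3 + c4 • A ^ e4)) x :=
    ip_nonneg (hΦ _ key) x
  rw [map_add, map_add, map_add, map_add, LinearMap.map_smul_of_tower, LinearMap.map_smul_of_tower,
    LinearMap.map_smul_of_tower, LinearMap.map_smul_of_tower, LinearMap.map_smul_of_tower, hΦ1,
    ip_add, ip_add, ip_add, ip_add, ip_smul, ip_smul, ip_smul, ip_smul, ip_smul,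
    ip_one hx, mul_one] at h1
  linarith [h1]

end Op

/-- Theorem 2.8(i), lower bound: refinement for two unital positive linear maps,
`0 < t ≤ 1/2`. -/
theorem thm_two_maps_lower (Φ Ψ : (H →L[ℂ] H) →ₗ[ℂ] (H →L[ℂ] H))
    (hΦ : ∀ X : H →L[ℂ] H, 0 ≤ X → 0 ≤ Φ X) (hΦ1 : Φ 1 = 1)
    (hΨ : ∀ X : H →L[ℂ] H, 0 ≤ X → 0 ≤ Ψ X) (hΨ1 : Ψ 1 = 1)
    (A B : H →L[ℂ] H) (hA : 0 ≤ A) (hA' : IsUnit A) (hB : 0 ≤ B) (hB' : IsUnit B)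
    (x : H) (hx : ‖x‖ = 1) (t : ℝ) (ht0 : 0 < t) (ht : t ≤ 1 / 2) :
    2 * min t (1 - t)
        * ((ip (Φ A) x + ip (Ψ B) x) / 2
            - ip (Φ (A ^ ((1 : ℝ) / 2))) x * ip (Ψ (B ^ ((1 : ℝ) / 2))) x)
      + min (2 * min t (1 - t)) (1 - 2 * min t (1 - t))
        * (ip (Φ (A ^ ((1 : ℝ) / 2))) x * ip (Ψ (B ^ ((1 : ℝ) / 2))) x + ip (Φ A) x
            - 2 * ip (Φ (A ^ ((3 : ℝ) / 4))) x * ip (Ψ (B ^ ((1 : ℝ) / 4))) x)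
      ≤ (1 - t) * ip (Φ A) x + t * ip (Ψ B) x
          - ip (Ψ (B ^ t)) x * ip (Φ (A ^ (1 - t))) x := by
  have hmin : min t (1 - t) = t := min_eq_left (by linarith)
  rw [hmin]
  set r0 : ℝ := min (2*t) (1-2*t) with hr0
  -- Step A: apply `step` to Φ, A for every b > 0
  have HA : ∀ b : ℝ, 0 < b →
      0 ≤ (0:ℝ) + (1-2*t-r0) * ip (Φ (A ^ (1:ℝ))) x
        + ((2*t-r0) * b^((1:ℝ)/2)) * ip (Φ (A ^ ((1:ℝ)/2))) x
        + (2*r0*b^((1:ℝ)/4)) * ip (Φ (A ^ ((3:ℝ)/4))) x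
        + (-(b^t)) * ip (Φ (A ^ (1-t))) x := by
    intro b hb
    apply step Φ hΦ hΦ1 A hA hA' x hx
    intro a ha
    have hs := scalar_key a b t ha hb ht0 ht
    rw [← hr0] at hs
    rw [Real.rpow_one]
    have e1 : a^((1:ℝ)/2)*b^((1:ℝ)/2) = b^((1:ℝ)/2)*a^((1:ℝ)/2) := mul_comm _ _
    nlinarith [hs]
  rw [CFC.rpow_one A hA] at HA
  -- Step B: apply `step` to Ψ, B
  have HB : 0 ≤ ((1-2*t-r0) * ip (Φ A) x)
      + ((2*t-r0) * ip (Φ (A ^ ((1:ℝ)/2))) x) * ip (Ψ (B ^ ((1:ℝ)/2))) x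
      + (2*r0 * ip (Φ (A ^ ((3:ℝ)/4))) x) * ip (Ψ (B ^ ((1:ℝ)/4))) x
      + (-(ip (Φ (A ^ (1-t))) x)) * ip (Ψ (B ^ t)) x
      + (0:ℝ) * ip (Ψ (B ^ (1:ℝ))) x := by
    apply step Ψ hΨ hΨ1 B hB hB' x hx
    intro b hb
    have := HA b hb
    nlinarith [this]
  nlinarith [HB]
end
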